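/- arXiv:2304.10788 — 4 statements merged into one kernel-verified Lean document; each statement's English description precedes it below -/
import Mathlib

section
/- Let α, β, θ > 0 and define F(x) = 1 − (1 − exp(−(α/x + β/(2x²))))^θ for x > 0. Then F is strictly increasing on (0, ∞), F(x) → 0 as x → 0⁺, and F(x) → 1 as x → ∞; hence F is a valid cumulative distribution function supported on (0, ∞). -/
open Real Filter Set Topology

theorem iglfr_cdf_valid
    (α β θ : ℝ) (hα : 0 < α) (hβ : 0 < β) (hθ : 0 < θ)
    (F : ℝ → ℝ)
    (hF : ∀ x : ℝ, 0 < x →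
      F x = 1 - (1 - Real.exp (-(α / x + β / (2 * x ^ 2)))) ^ θ) :
    StrictMonoOn F (Set.Ioi (0 : ℝ)) ∧
    Tendsto F (nhdsWithin 0 (Set.Ioi (0 : ℝ))) (nhds 0) ∧
    Tendsto F atTop (nhds 1) := by
  have key : ∀ x : ℝ, 0 < x → 0 < α / x + β / (2 * x ^ 2) := by
    intro x hx; positivity
  refine ⟨?_, ?_, ?_⟩
  · intro x hx y hy hxy
    simp only [Set.mem_Ioi] at hx hy
    rw [hF x hx, hF y hy]
    have hgy : α / y + β / (2 * y ^ 2) < α / x + β / (2 * x ^ 2) := by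
      have h1 : α / y < α / x := div_lt_div_of_pos_left hα hx hxy
      have h2 : β / (2 * y ^ 2) < β / (2 * x ^ 2) := by
        apply div_lt_div_of_pos_left hβ (by positivity)
        nlinarith
      linarith
    have he1 : Real.exp (-(α / x + β / (2 * x ^ 2))) <
        Real.exp (-(α / y + β / (2 * y ^ 2))) := by
      apply Real.exp_lt_exp.2; linarith
    have hlt1 : Real.exp (-(α / y + β / (2 * y ^ 2))) < 1 := by
      rw [Real.exp_lt_one_iff]
      have := key y hy; linarith
    have h0 : 0 < Real.exp (-(α / x + β / (2 * x ^ 2))) := Real.exp_pos _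
    have hpow : (1 - Real.exp (-(α / y + β / (2 * y ^ 2)))) ^ θ <
        (1 - Real.exp (-(α / x + β / (2 * x ^ 2)))) ^ θ :=
      Real.rpow_lt_rpow (by linarith) (by linarith) hθ
    linarith
  · have hmem : ∀ᶠ x in 𝓝[>] (0 : ℝ), 0 < x :=
      eventually_mem_nhdsWithin
    have hg : Tendsto (fun x : ℝ => α / x + β / (2 * x ^ 2)) (𝓝[>] (0 : ℝ)) atTop := by
      apply Filter.Tendsto.atTop_add_atTop
      · have : Tendsto (fun x : ℝ => α * x⁻¹) (𝓝[>] (0 : ℝ)) atTop :=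
          Tendsto.const_mul_atTop hα tendsto_inv_nhdsGT_zero
        exact this.congr (fun x => by rw [mul_comm, ← div_eq_inv_mul])
      · have h1 : Tendsto (fun x : ℝ => (β / 2) * (x⁻¹ * x⁻¹)) (𝓝[>] (0 : ℝ)) atTop :=
          Tendsto.const_mul_atTop (by positivity)
            (Tendsto.atTop_mul_atTop₀ tendsto_inv_nhdsGT_zero tendsto_inv_nhdsGT_zero)
        apply h1.congr'
        filter_upwards [hmem] with x hx
        have hx0 : x ≠ 0 := hx.ne'
        field_simp
        try ring
        try tauto
    have he : Tendsto (fun x : ℝ => Real.exp (-(α / x + β / (2 * x ^ 2))))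
        (𝓝[>] (0 : ℝ)) (𝓝 0) :=
      Real.tendsto_exp_atBot.comp (tendsto_neg_atTop_atBot.comp hg)
    have hb : Tendsto (fun x : ℝ => (1 - Real.exp (-(α / x + β / (2 * x ^ 2)))) ^ θ)
        (𝓝[>] (0 : ℝ)) (𝓝 1) := by
      have hc : ContinuousAt (fun t : ℝ => t ^ θ) 1 :=
        Real.continuousAt_rpow_const 1 θ (Or.inl one_ne_zero)
      have : Tendsto (fun x : ℝ => 1 - Real.exp (-(α / x + β / (2 * x ^ 2))))
          (𝓝[>] (0 : ℝ)) (𝓝 1) := by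
        have := (tendsto_const_nhds (x := (1:ℝ)) (f := 𝓝[>] (0:ℝ))).sub he
        simpa using this
      have := hc.tendsto.comp this
      simpa [Real.one_rpow, Function.comp_def] using this
    have : Tendsto F (𝓝[>] (0 : ℝ)) (𝓝 (1 - 1)) := by
      apply Tendsto.congr' _ ((tendsto_const_nhds (x := (1:ℝ))).sub hb)
      filter_upwards [hmem] with x hx
      exact (hF x hx).symm
    simpa using this
  · have hmem : ∀ᶠ x : ℝ in atTop, 0 < x := eventually_gt_atTop 0
    have hg : Tendsto (fun x : ℝ => α / x + β / (2 * x ^ 2)) atTop (𝓝 0) := by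
      have h1 : Tendsto (fun x : ℝ => α / x) atTop (𝓝 0) :=
        Tendsto.div_atTop tendsto_const_nhds tendsto_id
      have h2 : Tendsto (fun x : ℝ => β / (2 * x ^ 2)) atTop (𝓝 0) := by
        apply Tendsto.div_atTop tendsto_const_nhds
        exact Tendsto.const_mul_atTop two_pos (tendsto_pow_atTop (two_ne_zero))
      simpa using h1.add h2
    have he : Tendsto (fun x : ℝ => Real.exp (-(α / x + β / (2 * x ^ 2))))
        atTop (𝓝 1) := by
      have := Real.continuous_exp.continuousAt.tendsto.comp (hg.neg)
      simpa [Function.comp_def] using this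
    have hb : Tendsto (fun x : ℝ => (1 - Real.exp (-(α / x + β / (2 * x ^ 2)))) ^ θ)
        atTop (𝓝 0) := by
      have hc : ContinuousAt (fun t : ℝ => t ^ θ) 0 :=
        Real.continuousAt_rpow_const 0 θ (Or.inr hθ.le)
      have h1 : Tendsto (fun x : ℝ => 1 - Real.exp (-(α / x + β / (2 * x ^ 2))))
          atTop (𝓝 0) := by
        have := (tendsto_const_nhds (x := (1:ℝ)) (f := atTop)).sub he
        simpa using this
      have := hc.tendsto.comp h1
      simpa [Real.zero_rpow hθ.ne', Function.comp_def] using this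
    have : Tendsto F atTop (𝓝 (1 - 0)) := by
      apply Tendsto.congr' _ ((tendsto_const_nhds (x := (1:ℝ))).sub hb)
      filter_upwards [hmem] with x hx
      exact (hF x hx).symm
    simpa using this
end

section
/- Let α, β, θ > 0 and let h(x) = θ (α/x² + β/x³) exp(−(α/x + β/(2x²))) / (1 − exp(−(α/x + β/(2x²)))) for x > 0 be the IGLFR hazard rate. Then h(x) → 0 as x → 0⁺ and h(x) → 0 as x → ∞. -/
open Real Filter Set

lemma cube_exp_sq (c : ℝ) (hc : 0 < c) :
    Tendsto (fun t : ℝ => t ^ 3 * Real.exp (-(c * t ^ 2))) atTop (nhds 0) := by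
  have hcomp : Tendsto (fun t : ℝ => c * t ^ 2) atTop atTop :=
    (tendsto_pow_atTop (by norm_num)).const_mul_atTop hc
  have hU : Tendsto (fun t : ℝ => c⁻¹ ^ 2 * ((c * t ^ 2) ^ 2 * Real.exp (-(c * t ^ 2))))
      atTop (nhds 0) := by
    have := ((tendsto_pow_mul_exp_neg_atTop_nhds_zero 2).comp hcomp).const_mul (c⁻¹ ^ 2)
    simpa using this
  refine tendsto_of_tendsto_of_tendsto_of_le_of_le' tendsto_const_nhds hU ?_ ?_
  · filter_upwards [eventually_ge_atTop (0:ℝ)] with t ht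
    positivity
  · filter_upwards [eventually_ge_atTop (1:ℝ)] with t ht
    have h1 : t ^ 3 ≤ t ^ 4 := pow_le_pow_right₀ (by linarith) (by norm_num)
    have h2 : c⁻¹ ^ 2 * ((c * t ^ 2) ^ 2 * Real.exp (-(c * t ^ 2)))
        = t ^ 4 * Real.exp (-(c * t ^ 2)) := by
      field_simp
    rw [h2]
    exact mul_le_mul_of_nonneg_right h1 (Real.exp_nonneg _)

theorem iglfr_hazard_limits
    (α β θ : ℝ) (hα : 0 < α) (hβ : 0 < β) (hθ : 0 < θ)
    (h : ℝ → ℝ)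
    (hh : ∀ x : ℝ, 0 < x →
      h x = θ * (α / x ^ 2 + β / x ^ 3) * Real.exp (-(α / x + β / (2 * x ^ 2)))
        / (1 - Real.exp (-(α / x + β / (2 * x ^ 2))))) :
    Tendsto h (nhdsWithin 0 (Set.Ioi (0 : ℝ))) (nhds 0) ∧
    Tendsto h atTop (nhds 0) := by
  -- common facts
  set u : ℝ → ℝ := fun x => α / x + β / (2 * x ^ 2) with hu_def
  have hu_pos : ∀ x : ℝ, 0 < x → 0 < u x := by
    intro x hx; have : 0 < α / x := div_pos hα hx
    have : 0 < β / (2 * x ^ 2) := div_pos hβ (by positivity)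
    simp only [hu_def]; positivity
  have hE_lt : ∀ x : ℝ, 0 < x → Real.exp (-(u x)) < 1 := by
    intro x hx
    exact Real.exp_lt_one_iff.mpr (by linarith [hu_pos x hx])
  have hD_pos : ∀ x : ℝ, 0 < x → 0 < 1 - Real.exp (-(u x)) := by
    intro x hx; linarith [hE_lt x hx]
  have hN_pos : ∀ x : ℝ, 0 < x → 0 < α / x ^ 2 + β / x ^ 3 := by
    intro x hx; positivity
  have hnonneg : ∀ x : ℝ, 0 < x → 0 ≤ h x := by
    intro x hx
    rw [hh x hx]
    have h1 := hD_pos x hx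
    have h2 := hN_pos x hx
    have h3 := Real.exp_pos (-(u x))
    positivity
  constructor
  · -- limit at 0⁺
    set B : ℝ → ℝ := fun x =>
      2 * θ * (α + β) * ((x⁻¹) ^ 3 * Real.exp (-(β / 2 * (x⁻¹) ^ 2))) with hB_def
    have hBlim : Tendsto B (nhdsWithin 0 (Set.Ioi (0:ℝ))) (nhds 0) := by
      have := ((cube_exp_sq (β/2) (by positivity)).const_mul
        (2 * θ * (α + β))).comp tendsto_inv_nhdsGT_zero
      simpa only [hB_def, Function.comp_def, mul_zero] using this
    set δ : ℝ := min 1 (Real.sqrt (β / 2)) with hδ_def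
    have hδ : 0 < δ := lt_min one_pos (Real.sqrt_pos.mpr (by positivity))
    have hmem : Set.Ioo (0:ℝ) δ ∈ nhdsWithin 0 (Set.Ioi (0:ℝ)) :=
      Ioo_mem_nhdsGT_of_mem ⟨le_refl 0, hδ⟩
    refine tendsto_of_tendsto_of_tendsto_of_le_of_le' tendsto_const_nhds hBlim ?_ ?_
    · filter_upwards [self_mem_nhdsWithin] with x hx
      exact hnonneg x hx
    · filter_upwards [hmem] with x hx
      obtain ⟨hx0, hxδ⟩ := hx
      have hx1 : x < 1 := lt_of_lt_of_le hxδ (min_le_left _ _)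
      have hxs : x < Real.sqrt (β / 2) := lt_of_lt_of_le hxδ (min_le_right _ _)
      have hx2 : x ^ 2 < β / 2 := (Real.lt_sqrt hx0.le).mp hxs
      have hu_lb : β / (2 * x ^ 2) ≤ u x := by
        have : 0 ≤ α / x := le_of_lt (div_pos hα hx0)
        simp only [hu_def]; linarith
      have hu1 : 1 ≤ u x := by
        have h0 : 1 < β / (2 * x ^ 2) := (one_lt_div (by positivity)).mpr (by linarith)
        exact le_trans h0.le hu_lb
      have hE_half : Real.exp (-(u x)) ≤ 1 / 2 := by
        have h1 : Real.exp (-(u x)) ≤ Real.exp (-1) :=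
          Real.exp_le_exp.mpr (by exact neg_le_neg hu1)
        have h2 : (2:ℝ) ≤ Real.exp 1 := by
          linarith [Real.add_one_le_exp 1]
        have h3 : Real.exp (-1) ≤ 1 / 2 := by
          rw [Real.exp_neg]
          rw [inv_le_comm₀ (Real.exp_pos 1) (by norm_num)] at *
          linarith
        linarith
      have hD_half : 1 / 2 ≤ 1 - Real.exp (-(u x)) := by linarith
      have hN_le : α / x ^ 2 + β / x ^ 3 ≤ (α + β) * (x⁻¹) ^ 3 := by
        rw [div_add_div _ _ (by positivity) (by positivity)]
        rw [div_le_iff₀ (by positivity : (0:ℝ) < x ^ 2 * x ^ 3)]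
        have hx3 : 0 < x ^ 3 := by positivity
        have hxp : x ^ 3 ≤ x ^ 2 := pow_le_pow_of_le_one hx0.le hx1.le (by norm_num)
        have : α * x ^ 3 ≤ α * x ^ 2 := mul_le_mul_of_nonneg_left hxp hα.le
        have he : (α + β) * (x⁻¹) ^ 3 * (x ^ 2 * x ^ 3) = (α + β) * x ^ 2 := by
          field_simp
        rw [he]; nlinarith
      have hE_le : Real.exp (-(u x)) ≤ Real.exp (-(β / 2 * (x⁻¹) ^ 2)) := by
        apply Real.exp_le_exp.mpr
        have : β / 2 * (x⁻¹) ^ 2 = β / (2 * x ^ 2) := by field_simp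
        rw [this]; exact neg_le_neg hu_lb
      rw [hh x hx0]
      have hD := hD_pos x hx0
      rw [div_le_iff₀ hD]
      have step1 : θ * (α / x ^ 2 + β / x ^ 3) * Real.exp (-(u x))
          ≤ θ * ((α + β) * (x⁻¹) ^ 3) * Real.exp (-(β / 2 * (x⁻¹) ^ 2)) := by
        apply mul_le_mul
        · exact mul_le_mul_of_nonneg_left hN_le hθ.le
        · exact hE_le
        · exact (Real.exp_pos _).le
        · positivity
      have step2 : θ * ((α + β) * (x⁻¹) ^ 3) * Real.exp (-(β / 2 * (x⁻¹) ^ 2))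
          ≤ B x * (1 - Real.exp (-(u x))) := by
        have hB_nn : 0 ≤ B x := by
          have := Real.exp_nonneg (-(β / 2 * (x⁻¹) ^ 2))
          simp only [hB_def]; positivity
        have : B x * (1/2) ≤ B x * (1 - Real.exp (-(u x))) :=
          mul_le_mul_of_nonneg_left hD_half hB_nn
        calc θ * ((α + β) * (x⁻¹) ^ 3) * Real.exp (-(β / 2 * (x⁻¹) ^ 2))
            = B x * (1/2) := by simp only [hB_def]; ring
          _ ≤ _ := this
      calc θ * (α / x ^ 2 + β / x ^ 3) * Real.exp (-(u x)) ≤ _ := step1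
        _ ≤ _ := step2
  · -- limit at ∞
    set G : ℝ → ℝ := fun x => θ * (α / x + β / x ^ 2) / α with hG_def
    have hGlim : Tendsto G atTop (nhds 0) := by
      have h1 : Tendsto (fun x : ℝ => α / x) atTop (nhds 0) :=
        tendsto_const_nhds.div_atTop tendsto_id
      have h2 : Tendsto (fun x : ℝ => β / x ^ 2) atTop (nhds 0) :=
        tendsto_const_nhds.div_atTop (tendsto_pow_atTop (by norm_num))
      have := ((h1.add h2).const_mul θ).div_const α
      simpa [hG_def] using this
    refine tendsto_of_tendsto_of_tendsto_of_le_of_le' tendsto_const_nhds hGlim ?_ ?_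
    · filter_upwards [eventually_gt_atTop (0:ℝ)] with x hx
      exact hnonneg x hx
    · filter_upwards [eventually_gt_atTop (0:ℝ)] with x hx
      rw [hh x hx]
      have hD := hD_pos x hx
      have hE := Real.exp_pos (-(u x))
      have hN := hN_pos x hx
      rw [hG_def, div_le_div_iff₀ hD hα]
      have key : u x * Real.exp (-(u x)) ≤ 1 - Real.exp (-(u x)) := by
        have h1 : u x + 1 ≤ Real.exp (u x) := Real.add_one_le_exp (u x)
        have h2 : Real.exp (-(u x)) * Real.exp (u x) = 1 := by
          rw [← Real.exp_add]; simp
        nlinarith [mul_le_mul_of_nonneg_left h1 hE.le]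
      have hxu : α ≤ x * u x := by
        have he : x * u x = α + β / (2 * x) := by
          simp only [hu_def]; field_simp
        rw [he]
        have : 0 ≤ β / (2 * x) := by positivity
        linarith
      have hNx : θ * (α / x + β / x ^ 2) = θ * (α / x ^ 2 + β / x ^ 3) * x := by
        field_simp
      rw [hNx]
      have s1 : Real.exp (-(u x)) * α ≤ x * (1 - Real.exp (-(u x))) := by
        have a1 : Real.exp (-(u x)) * α ≤ Real.exp (-(u x)) * (x * u x) :=
          mul_le_mul_of_nonneg_left hxu hE.le
        have a2 : x * (u x * Real.exp (-(u x))) ≤ x * (1 - Real.exp (-(u x))) :=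
          mul_le_mul_of_nonneg_left key hx.le
        nlinarith
      have hθN : 0 ≤ θ * (α / x ^ 2 + β / x ^ 3) := by positivity
      calc θ * (α / x ^ 2 + β / x ^ 3) * Real.exp (-(u x)) * α
          = θ * (α / x ^ 2 + β / x ^ 3) * (Real.exp (-(u x)) * α) := by ring
        _ ≤ θ * (α / x ^ 2 + β / x ^ 3) * (x * (1 - Real.exp (-(u x)))) :=
            mul_le_mul_of_nonneg_left s1 hθN
        _ = θ * (α / x ^ 2 + β / x ^ 3) * x * (1 - Real.exp (-(u x))) := by ring
end

section
/- Let α, β, θ > 0 and let F(x) = 1 − (1 − exp(−(α/x + β/(2x²))))^θ for x > 0 be the IGLFR CDF. Set L = log(1 − (1/2)^{1/θ}) (note L < 0) and define M = (−α − √(α² − 2βL)) / (2L). Then M > 0 and F(M) = 1/2; that is, M is the median of the IGLFR distribution. -/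
/-!
Write `c = (1/2)^(1/θ) ∈ (0, 1)`, so that `L = log (1 - c) < 0` and `exp L = 1 - c`.
The number `M` is the positive root of `L M² + α M + β/2 = 0` (the discriminant `α² - 2βL`
exceeds `α²`, so `M > 0` whatever the sign of `α`). Dividing that equation by `M²` gives
`α/M + β/(2M²) = -L`, hence `1 - exp (-(α/M + β/(2M²))) = c` and `F(M) = 1 - c^θ = 1/2`.
-/

open Real

lemma rpow_one_div_mem_Ioo {p θ : ℝ} (hp₀ : 0 < p) (hp₁ : p < 1) (hθ : 0 < θ) :
    p ^ (1 / θ) ∈ Set.Ioo 0 1 :=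
  ⟨rpow_pos_of_pos hp₀ _, rpow_lt_one hp₀.le hp₁ (by positivity)⟩

lemma log_one_sub_rpow_one_div_neg {p θ : ℝ} (hp₀ : 0 < p) (hp₁ : p < 1) (hθ : 0 < θ) :
    log (1 - p ^ (1 / θ)) < 0 := by
  obtain ⟨hc₀, hc₁⟩ := rpow_one_div_mem_Ioo hp₀ hp₁ hθ
  exact log_neg (by linarith) (by linarith)

lemma one_sub_one_sub_exp_log_rpow {p θ : ℝ} (hp₀ : 0 < p) (hp₁ : p < 1) (hθ : 0 < θ) :
    1 - (1 - exp (log (1 - p ^ (1 / θ)))) ^ θ = 1 - p := by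
  obtain ⟨-, hc₁⟩ := rpow_one_div_mem_Ioo hp₀ hp₁ hθ
  rw [exp_log (by linarith), sub_sub_cancel, ← rpow_mul hp₀.le, one_div_mul_cancel hθ.ne',
    rpow_one]

section QuadraticRoot

variable {α β L : ℝ}

lemma sqrt_discrim_gt_neg (hβ : 0 < β) (hL : L < 0) : -α < √(α ^ 2 - 2 * β * L) := by
  have hα : |α| < √(α ^ 2 - 2 * β * L) := by
    rw [← sqrt_sq_eq_abs]
    exact sqrt_lt_sqrt (sq_nonneg α) (by nlinarith)
  linarith [neg_abs_le α]

lemma quadratic_root_pos (hβ : 0 < β) (hL : L < 0) :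
    0 < (-α - √(α ^ 2 - 2 * β * L)) / (2 * L) :=
  div_pos_of_neg_of_neg (by linarith [sqrt_discrim_gt_neg (α := α) hβ hL]) (by linarith)

lemma quadratic_root_isRoot (hβ : 0 < β) (hL : L < 0) :
    let M := (-α - √(α ^ 2 - 2 * β * L)) / (2 * L)
    L * (M * M) + α * M + β / 2 = 0 := by
  intro M
  have hdisc : discrim L α (β / 2) = √(α ^ 2 - 2 * β * L) * √(α ^ 2 - 2 * β * L) := by
    rw [mul_self_sqrt (by nlinarith), discrim]
    ring
  exact (quadratic_eq_zero_iff hL.ne hdisc M).2 (Or.inr rfl)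

lemma div_add_div_sq_eq_neg_of_isRoot {M : ℝ} (hM : M ≠ 0)
    (hroot : L * (M * M) + α * M + β / 2 = 0) : α / M + β / (2 * M ^ 2) = -L := by
  field_simp
  linear_combination 2 * hroot

end QuadraticRoot

theorem iglfr_median_general
    (α β θ : ℝ) (hβ : 0 < β) (hθ : 0 < θ)
    (L M : ℝ)
    (hL : L = Real.log (1 - (1 / 2 : ℝ) ^ (1 / θ)))
    (hM : M = (-α - Real.sqrt (α ^ 2 - 2 * β * L)) / (2 * L)) :
    L < 0 ∧ 0 < M ∧
      1 - (1 - Real.exp (-(α / M + β / (2 * M ^ 2)))) ^ θ = 1 / 2 := by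
  have hL₀ : L < 0 := hL ▸ log_one_sub_rpow_one_div_neg (by norm_num) (by norm_num) hθ
  have hM₀ : 0 < M := hM ▸ quadratic_root_pos hβ hL₀
  have hexponent : α / M + β / (2 * M ^ 2) = -L :=
    div_add_div_sq_eq_neg_of_isRoot hM₀.ne' (hM ▸ quadratic_root_isRoot hβ hL₀)
  refine ⟨hL₀, hM₀, ?_⟩
  rw [hexponent, neg_neg, hL, one_sub_one_sub_exp_log_rpow (by norm_num) (by norm_num) hθ]
  norm_num

theorem iglfr_median
    (α β θ : ℝ) (hα : 0 < α) (hβ : 0 < β) (hθ : 0 < θ)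
    (L M : ℝ)
    (hL : L = Real.log (1 - (1 / 2 : ℝ) ^ (1 / θ)))
    (hM : M = (-α - Real.sqrt (α ^ 2 - 2 * β * L)) / (2 * L)) :
    L < 0 ∧ 0 < M ∧
      1 - (1 - Real.exp (-(α / M + β / (2 * M ^ 2)))) ^ θ = 1 / 2 :=
  iglfr_median_general α β θ hβ hθ L M hL hM
end

section
/- (Likelihood ratio ordering, Theorem 2.1) Let α, β > 0 and θ₁ ≥ θ₂ > 0. Let f(x; α, β, θ) = θ(α/x² + β/x³) exp(−(α/x + β/(2x²))) (1 − exp(−(α/x + β/(2x²))))^{θ−1} be the IGLFR density. Then the ratio x ↦ f(x; α, β, θ₂)/f(x; α, β, θ₁) is monotone nondecreasing on (0, ∞). Equivalently, if X ∼ IGLFR(α, β, θ₁) and Y ∼ IGLFR(α, β, θ₂) with θ₁ ≥ θ₂, then X ≤_{lr} Y. -/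
open Real

/-- The IGLFR probability density function. -/
noncomputable def iglfrPDF (α β θ x : ℝ) : ℝ :=
  θ * (α / x ^ 2 + β / x ^ 3) * Real.exp (-(α / x + β / (2 * x ^ 2)))
    * (1 - Real.exp (-(α / x + β / (2 * x ^ 2)))) ^ (θ - 1)

lemma iglfr_ratio_eq (α β θ₁ θ₂ : ℝ) (hα : 0 < α) (hβ : 0 < β)
    (hθ₁ : 0 < θ₁) (x : ℝ) (hx : 0 < x) :
    iglfrPDF α β θ₂ x / iglfrPDF α β θ₁ x
      = θ₂ / θ₁ * (1 - Real.exp (-(α / x + β / (2 * x ^ 2)))) ^ (θ₂ - θ₁) := by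
  set t : ℝ := α / x + β / (2 * x ^ 2) with ht
  have ht0 : 0 < t := by positivity
  have hE : Real.exp (-t) < 1 := by
    rw [Real.exp_lt_one_iff]; linarith
  set u : ℝ := 1 - Real.exp (-t) with hu
  have hu0 : 0 < u := by simp [hu]; linarith
  have hA : 0 < α / x ^ 2 + β / x ^ 3 := by positivity
  have hsplit : u ^ (θ₂ - 1) = u ^ (θ₂ - θ₁) * u ^ (θ₁ - 1) := by
    rw [← Real.rpow_add hu0]; ring_nf
  have hu1 : u ^ (θ₁ - 1) ≠ 0 := (Real.rpow_pos_of_pos hu0 _).ne'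
  simp only [iglfrPDF, ← ht, ← hu, hsplit]
  field_simp

/-- Theorem 2.1: likelihood ratio ordering within the IGLFR family. -/
theorem iglfr_likelihood_ratio_order
    (α β θ₁ θ₂ : ℝ) (hα : 0 < α) (hβ : 0 < β) (hθ₂ : 0 < θ₂) (hθ : θ₂ ≤ θ₁) :
    MonotoneOn (fun x => iglfrPDF α β θ₂ x / iglfrPDF α β θ₁ x) (Set.Ioi (0 : ℝ)) := by
  have hθ₁ : 0 < θ₁ := lt_of_lt_of_le hθ₂ hθ
  intro x hx y hy hxy
  simp only [Set.mem_Ioi] at hx hy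
  simp only []
  rw [iglfr_ratio_eq α β θ₁ θ₂ hα hβ hθ₁ x hx,
    iglfr_ratio_eq α β θ₁ θ₂ hα hβ hθ₁ y hy]
  have htxy : α / y + β / (2 * y ^ 2) ≤ α / x + β / (2 * x ^ 2) := by
    gcongr
  have huy : 0 < 1 - Real.exp (-(α / y + β / (2 * y ^ 2))) := by
    have : Real.exp (-(α / y + β / (2 * y ^ 2))) < 1 := by
      rw [Real.exp_lt_one_iff]
      have : 0 < α / y + β / (2 * y ^ 2) := by positivity
      linarith
    linarith
  have hule : 1 - Real.exp (-(α / y + β / (2 * y ^ 2)))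
      ≤ 1 - Real.exp (-(α / x + β / (2 * x ^ 2))) := by
    have := Real.exp_le_exp.mpr (neg_le_neg htxy)
    linarith
  have := Real.rpow_le_rpow_of_nonpos huy hule (by linarith : θ₂ - θ₁ ≤ 0)
  have hc : 0 ≤ θ₂ / θ₁ := by positivity
  exact mul_le_mul_of_nonneg_left this hc
end
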